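/- The four rational numbers 2^4·3^3·5^3, -2^15·3·5^3, -3^3·5^3, and 2^6·5^3 are multiplicatively dependent, but every proper nonempty subset is multiplicatively independent. -/

import Mathlib

private lemma my_zpow {p : ℕ} [Fact p.Prime] {q : ℚ} (hq : q ≠ 0) (n : ℤ) :
    padicValRat p (q ^ n) = n * padicValRat p q := by
  cases n with
  | ofNat k => rw [Int.ofNat_eq_coe, zpow_natCast, padicValRat.pow (q := q)]
  | negSucc k =>
      rw [zpow_negSucc, padicValRat.inv, padicValRat.pow (q := q)]
      rw [Int.negSucc_eq]; push_cast; ring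

private lemma my_vpq {p q : ℕ} (hp : p.Prime) (hq : q.Prime) (h : p ≠ q) :
    padicValRat p ((q : ℕ) : ℚ) = 0 := by
  rw [padicValRat.of_nat, padicValNat.eq_zero_of_not_dvd
    ((Nat.Prime.coprime_iff_not_dvd hp).1 ((Nat.coprime_primes hp hq).2 h))]
  simp

private lemma my_key (p : ℕ) [Fact p.Prime] (v2 v3 v5 : ℤ)
    (h2 : padicValRat p (2 : ℚ) = v2) (h3 : padicValRat p (3 : ℚ) = v3)
    (h5 : padicValRat p (5 : ℚ) = v5) (a : Fin 4 → ℤ)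
    (h : (((2:ℚ)^4*3^3*5^3) ^ a 0) * ((-(2:ℚ)^15*3*5^3) ^ a 1) *
        ((-(3:ℚ)^3*5^3) ^ a 2) * (((2:ℚ)^6*5^3) ^ a 3) = 1) :
    a 0 * (4*v2+3*v3+3*v5) + a 1 * (15*v2+v3+3*v5) + a 2 * (3*v3+3*v5)
      + a 3 * (6*v2+3*v5) = 0 := by
  have e0 : padicValRat p ((2:ℚ)^4*3^3*5^3) = 4*v2+3*v3+3*v5 := by
    rw [padicValRat.mul (by norm_num) (by norm_num),
        padicValRat.mul (by norm_num) (by norm_num),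
        padicValRat.pow (q := (2:ℚ)),
        padicValRat.pow (q := (3:ℚ)),
        padicValRat.pow (q := (5:ℚ)), h2, h3, h5]
    push_cast; ring
  have e1 : padicValRat p (-(2:ℚ)^15*3*5^3) = 15*v2+v3+3*v5 := by
    rw [show -(2:ℚ)^15*3*5^3 = -((2:ℚ)^15*3*5^3) by ring, padicValRat.neg,
        padicValRat.mul (by norm_num) (by norm_num),
        padicValRat.mul (by norm_num) (by norm_num),
        padicValRat.pow (q := (2:ℚ)),
        padicValRat.pow (q := (5:ℚ)), h2, h3, h5]
    push_cast; ring
  have e2 : padicValRat p (-(3:ℚ)^3*5^3) = 3*v3+3*v5 := by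
    rw [show -(3:ℚ)^3*5^3 = -((3:ℚ)^3*5^3) by ring, padicValRat.neg,
        padicValRat.mul (by norm_num) (by norm_num),
        padicValRat.pow (q := (3:ℚ)),
        padicValRat.pow (q := (5:ℚ)), h3, h5]
    push_cast; ring
  have e3 : padicValRat p ((2:ℚ)^6*5^3) = 6*v2+3*v5 := by
    rw [padicValRat.mul (by norm_num) (by norm_num),
        padicValRat.pow (q := (2:ℚ)),
        padicValRat.pow (q := (5:ℚ)), h2, h5]
    push_cast; ring
  have z0 : ((2:ℚ)^4*3^3*5^3) ^ a 0 ≠ 0 := zpow_ne_zero _ (by norm_num)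
  have z1 : (-(2:ℚ)^15*3*5^3) ^ a 1 ≠ 0 := zpow_ne_zero _ (by norm_num)
  have z2 : (-(3:ℚ)^3*5^3) ^ a 2 ≠ 0 := zpow_ne_zero _ (by norm_num)
  have z3 : ((2:ℚ)^6*5^3) ^ a 3 ≠ 0 := zpow_ne_zero _ (by norm_num)
  have H := congrArg (padicValRat p) h
  rw [padicValRat.one, padicValRat.mul (mul_ne_zero (mul_ne_zero z0 z1) z2) z3,
      padicValRat.mul (mul_ne_zero z0 z1) z2, padicValRat.mul z0 z1,
      my_zpow (by norm_num) (a 0), my_zpow (by norm_num) (a 1),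
      my_zpow (by norm_num) (a 2), my_zpow (by norm_num) (a 3),
      e0, e1, e2, e3] at H
  linarith

set_option maxHeartbeats 2000000 in
/-- The tuple `(2^4·3^3·5^3, -2^15·3·5^3, -3^3·5^3, 2^6·5^3)` is a singular-dependent
4-tuple: multiplicatively dependent, but every proper nonempty subset is
multiplicatively independent. -/
theorem stmt_2 :
    let x : Fin 4 → ℚ :=
      ![(2 : ℚ) ^ 4 * 3 ^ 3 * 5 ^ 3, -(2 : ℚ) ^ 15 * 3 * 5 ^ 3,
        -(3 : ℚ) ^ 3 * 5 ^ 3, (2 : ℚ) ^ 6 * 5 ^ 3]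
    (∃ a : Fin 4 → ℤ, a ≠ 0 ∧ ∏ i, x i ^ a i = 1) ∧
      ∀ s : Finset (Fin 4), s ⊂ Finset.univ →
        ∀ a : Fin 4 → ℤ, (∀ i ∉ s, a i = 0) → ∏ i, x i ^ a i = 1 → a = 0 := by
  intro x
  haveI f2 : Fact (Nat.Prime 2) := ⟨by norm_num⟩
  haveI f3 : Fact (Nat.Prime 3) := ⟨by norm_num⟩
  haveI f5 : Fact (Nat.Prime 5) := ⟨by norm_num⟩
  have v23 : padicValRat 2 (3 : ℚ) = 0 := by
    have := my_vpq (p := 2) (q := 3) (by norm_num) (by norm_num) (by norm_num)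
    norm_num at this ⊢; exact this
  have v25 : padicValRat 2 (5 : ℚ) = 0 := by
    have := my_vpq (p := 2) (q := 5) (by norm_num) (by norm_num) (by norm_num)
    norm_num at this ⊢; exact this
  have v32 : padicValRat 3 (2 : ℚ) = 0 := by
    have := my_vpq (p := 3) (q := 2) (by norm_num) (by norm_num) (by norm_num)
    norm_num at this ⊢; exact this
  have v35 : padicValRat 3 (5 : ℚ) = 0 := by
    have := my_vpq (p := 3) (q := 5) (by norm_num) (by norm_num) (by norm_num)
    norm_num at this ⊢; exact this
  have v52 : padicValRat 5 (2 : ℚ) = 0 := by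
    have := my_vpq (p := 5) (q := 2) (by norm_num) (by norm_num) (by norm_num)
    norm_num at this ⊢; exact this
  have v53 : padicValRat 5 (3 : ℚ) = 0 := by
    have := my_vpq (p := 5) (q := 3) (by norm_num) (by norm_num) (by norm_num)
    norm_num at this ⊢; exact this
  have v22 : padicValRat 2 (2 : ℚ) = 1 := padicValRat.self (by norm_num)
  have v33 : padicValRat 3 (3 : ℚ) = 1 := padicValRat.self (by norm_num)
  have v55 : padicValRat 5 (5 : ℚ) = 1 := padicValRat.self (by norm_num)
  constructor
  · refine ⟨![66, -24, -58, 16], ?_, ?_⟩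
    · intro h
      have := congrFun h 0
      simp at this
    · simp only [x, Fin.prod_univ_four, Matrix.cons_val_zero, Matrix.cons_val_one,
        Matrix.head_cons, Matrix.cons_val_two, Matrix.tail_cons, Matrix.cons_val_three]
      norm_num
  · intro s hs a ha hprod
    rw [Fin.prod_univ_four] at hprod
    simp only [x, Matrix.cons_val_zero, Matrix.cons_val_one, Matrix.head_cons,
      Matrix.cons_val_two, Matrix.tail_cons, Matrix.cons_val_three] at hprod
    have E2 := my_key 2 1 0 0 v22 v23 v25 a hprod
    have E3 := my_key 3 0 1 0 v32 v33 v35 a hprod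
    have E5 := my_key 5 0 0 1 v52 v53 v55 a hprod
    have F2 : 4 * a 0 + 15 * a 1 + 6 * a 3 = 0 := by linarith
    have F3 : 3 * a 0 + a 1 + 3 * a 2 = 0 := by linarith
    have F5 : a 0 + a 1 + a 2 + a 3 = 0 := by linarith
    clear E2 E3 E5 hprod v22 v23 v25 v32 v33 v35 v52 v53 v55
    obtain ⟨i, -, his⟩ := Finset.exists_of_ssubset hs
    have hi := ha i his
    have hd : a 0 = 0 ∨ a 1 = 0 ∨ a 2 = 0 ∨ a 3 = 0 := by
      fin_cases i
      · exact Or.inl hi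
      · exact Or.inr (Or.inl hi)
      · exact Or.inr (Or.inr (Or.inl hi))
      · exact Or.inr (Or.inr (Or.inr hi))
    clear hi his ha hs
    clear_value x
    clear x s i
    have h0 : a 0 = 0 := by omega
    have h1 : a 1 = 0 := by omega
    have h2 : a 2 = 0 := by omega
    have h3 : a 3 = 0 := by omega
    funext j
    fin_cases j <;> simp only [Pi.zero_apply] <;> assumption
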